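/- Half-characteristic functional relation (a): for all complex u, v, θ[1,1;0,0](u,v) · θ[0,0;0,0](u,v) = ( Θ[1/2,1/2;0,0](2u,2v) + Θ[−1/2,−1/2;0,0](2u,2v) ) · Θ[1/2,1/2;0,0](0,0) + ( Θ[1/2,−1/2;0,0](2u,2v) + Θ[−1/2,1/2;0,0](2u,2v) ) · Θ[1/2,−1/2;0,0](0,0). -/

import Mathlib

open Complex

/-- Genus-two theta function with real characteristics `a c b d`
(upper characteristics `a, c`, lower characteristics `b, d`),
moduli `τ₁ τ₂ τ₁₂` and complex arguments `x y`. -/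
noncomputable def theta (τ₁ τ₂ τ₁₂ : ℂ) (a c b d : ℝ) (x y : ℂ) : ℂ :=
  ∑' p : ℤ × ℤ,
    Complex.exp
      ((Real.pi : ℂ) * Complex.I *
          (τ₁ * ((p.1 : ℂ) + (a : ℂ) / 2) ^ 2 + τ₂ * ((p.2 : ℂ) + (c : ℂ) / 2) ^ 2 +
            2 * τ₁₂ * ((p.1 : ℂ) + (a : ℂ) / 2) * ((p.2 : ℂ) + (c : ℂ) / 2)) +
        2 * (Real.pi : ℂ) * Complex.I *
          (((p.1 : ℂ) + (a : ℂ) / 2) * (x + (b : ℂ) / 2) +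
            ((p.2 : ℂ) + (c : ℂ) / 2) * (y + (d : ℂ) / 2)))

/-- The same theta function with doubled moduli `2τ₁, 2τ₂, 2τ₁₂`. -/
noncomputable def Theta2 (τ₁ τ₂ τ₁₂ : ℂ) (a c b d : ℝ) (x y : ℂ) : ℂ :=
  theta (2 * τ₁) (2 * τ₂) (2 * τ₁₂) a c b d x y

/-!
Multiplying the two series gives a sum over pairs `(m, n) ∈ (ℤ² + ½) × ℤ²`. With
`A = (m + n) / 2` and `B = (m - n) / 2` the quadratic form splits as
`Q(m) + Q(n) = 2 Q(A) + 2 Q(B)` and the linear term becomes `2 A · (u, v)`. According to the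
parity of each coordinate of `m + n - ½`, the pair `(A, B)` ranges over `(ℤ² + (±¼, ±¼))²`,
so each of the four sectors contributes `Θ[a,c](2u,2v) · Θ[a,c](0,0)` with `a, c = ±½`; the
sectors then pair up via `Θ[-a,-c](0,0) = Θ[a,c](0,0)`. The rearrangement is licensed by
absolute convergence, obtained by dominating the terms by products of one-variable Jacobi
theta terms.
-/

open Real in
lemma summable_exp_neg_sq_sub_mul {ε : ℝ} (hε : 0 < ε) (α X : ℝ) :
    Summable fun m : ℤ => rexp (-π * ε * (m + α) ^ 2 - 2 * π * (m + α) * X) := by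
  have h := ((summable_jacobiTheta₂_term_iff (I * (α * ε + X)) (I * ε)).mpr (by simpa)).norm
  refine (h.mul_left (rexp (-π * ε * α ^ 2 - 2 * π * α * X))).congr fun m ↦ ?_
  rw [norm_jacobiTheta₂_term, ← Real.exp_add]
  congr 1
  simp only [mul_im, I_re, I_im, zero_mul, one_mul, zero_add, ← ofReal_mul, ← ofReal_add,
    ofReal_re]
  ring

lemma exists_pos_diag_le_quadratic {y₁ y₂ w : ℝ} (h₂ : 0 < y₂) (h : w ^ 2 < y₁ * y₂) :
    ∃ ε₁ > 0, ∃ ε₂ > 0, ∀ s t : ℝ,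
      ε₁ * s ^ 2 + ε₂ * t ^ 2 ≤ y₁ * s ^ 2 + y₂ * t ^ 2 + 2 * w * s * t := by
  obtain ⟨δ, hlo, hhi⟩ := exists_between ((div_lt_iff₀ h₂).mpr h)
  have hδ : 0 < δ := (div_nonneg (sq_nonneg w) h₂.le).trans_lt hlo
  refine ⟨y₁ - δ, sub_pos.mpr hhi, y₂ - w ^ 2 / δ, sub_pos.mpr ((div_lt_iff₀ hδ).mpr ?_),
    fun s t ↦ ?_⟩
  · rwa [div_lt_iff₀ h₂, mul_comm] at hlo
  · have hsq : (δ * s + w * t) ^ 2 / δ = δ * s ^ 2 + 2 * w * s * t + w ^ 2 / δ * t ^ 2 := by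
      field_simp; ring
    have hnonneg : 0 ≤ (δ * s + w * t) ^ 2 / δ := by positivity
    linarith

open Real in
noncomputable def thetaTerm (τ₁ τ₂ τ₁₂ : ℂ) (a c b d : ℝ) (x y : ℂ) (p : ℤ × ℤ) : ℂ :=
  cexp (π * I * (τ₁ * (p.1 + a / 2) ^ 2 + τ₂ * (p.2 + c / 2) ^ 2 +
      2 * τ₁₂ * (p.1 + a / 2) * (p.2 + c / 2)) +
    2 * π * I * ((p.1 + a / 2) * (x + b / 2) + (p.2 + c / 2) * (y + d / 2)))

section thetaTerm

variable (τ₁ τ₂ τ₁₂ : ℂ) (a c b d : ℝ) (x y : ℂ)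

lemma theta_eq_tsum_thetaTerm :
    theta τ₁ τ₂ τ₁₂ a c b d x y = ∑' p, thetaTerm τ₁ τ₂ τ₁₂ a c b d x y p :=
  rfl

open Real in
lemma norm_thetaTerm (p : ℤ × ℤ) :
    ‖thetaTerm τ₁ τ₂ τ₁₂ a c b d x y p‖ =
      rexp (-π * (τ₁.im * (p.1 + a / 2) ^ 2 + τ₂.im * (p.2 + c / 2) ^ 2 +
          2 * τ₁₂.im * (p.1 + a / 2) * (p.2 + c / 2)) -
        2 * π * ((p.1 + a / 2) * (x + b / 2).im + (p.2 + c / 2) * (y + d / 2).im)) := by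
  rw [thetaTerm, Complex.norm_exp]
  congr 1
  simp only [pow_two, add_re, mul_re, ofReal_re, I_re, mul_zero, ofReal_im, I_im, mul_one,
    sub_self, intCast_re, div_ofNat_re, add_im, intCast_im, div_ofNat_im, zero_div, add_zero,
    sub_zero, mul_im, zero_mul, re_ofNat, im_ofNat, zero_add, zero_sub, neg_mul]
  ring

variable {τ₁ τ₂ τ₁₂} in
lemma summable_norm_thetaTerm (h₂ : 0 < τ₂.im) (h : τ₁₂.im ^ 2 < τ₁.im * τ₂.im) :
    Summable fun p ↦ ‖thetaTerm τ₁ τ₂ τ₁₂ a c b d x y p‖ := by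
  obtain ⟨ε₁, hε₁, ε₂, hε₂, hQ⟩ := exists_pos_diag_le_quadratic h₂ h
  refine ((summable_exp_neg_sq_sub_mul hε₁ (a / 2) (x + b / 2).im).mul_of_nonneg
    (summable_exp_neg_sq_sub_mul hε₂ (c / 2) (y + d / 2).im) (fun _ ↦ (Real.exp_pos _).le)
    (fun _ ↦ (Real.exp_pos _).le)).of_nonneg_of_le (fun _ ↦ norm_nonneg _) fun p ↦ ?_
  rw [norm_thetaTerm, ← Real.exp_add, Real.exp_le_exp]
  nlinarith [hQ (p.1 + a / 2) (p.2 + c / 2), Real.pi_pos]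

lemma theta_neg : theta τ₁ τ₂ τ₁₂ (-a) (-c) (-b) (-d) (-x) (-y) = theta τ₁ τ₂ τ₁₂ a c b d x y := by
  rw [theta_eq_tsum_thetaTerm, ← (Equiv.neg (ℤ × ℤ)).tsum_eq]
  refine tsum_congr fun p ↦ ?_
  simp only [thetaTerm, Equiv.neg_apply, Prod.fst_neg, Prod.snd_neg]
  congr 1
  push_cast
  ring

end thetaTerm

noncomputable def sumSubEquiv : Bool × ℤ × ℤ ≃ ℤ × ℤ :=
  Equiv.ofBijective (fun q ↦ (q.2.1 + q.2.2 - cond q.1 1 0, q.2.1 - q.2.2)) <| by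
    refine ⟨fun ⟨s, A, B⟩ ⟨s', A', B'⟩ h ↦ ?_, fun ⟨p, q⟩ ↦ ?_⟩
    · cases s <;> cases s' <;>
        simp only [cond_true, cond_false, Prod.mk.injEq, true_and, reduceCtorEq, false_and]
          at h ⊢ <;>
        omega
    · rcases Int.even_or_odd (p + q) with ⟨k, hk⟩ | ⟨k, hk⟩
      · exact ⟨(false, k, k - q), by simp only [cond_false, Prod.mk.injEq]; omega⟩
      · exact ⟨(true, k + 1, k + 1 - q), by simp only [cond_true, Prod.mk.injEq]; omega⟩

noncomputable def sumSubEquiv₂ : (Bool × Bool) × (ℤ × ℤ) × (ℤ × ℤ) ≃ (ℤ × ℤ) × (ℤ × ℤ) :=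
  ((Equiv.refl _).prodCongr (Equiv.prodProdProdComm ℤ ℤ ℤ ℤ)).trans <|
    (Equiv.prodProdProdComm _ _ _ _).trans <|
      (sumSubEquiv.prodCongr sumSubEquiv).trans (Equiv.prodProdProdComm _ _ _ _)

section doubling

variable (τ₁ τ₂ τ₁₂ u v : ℂ)

lemma thetaTerm_mul_thetaTerm_eq_doubled (A B C D σ₁ σ₂ : ℤ) {a c : ℝ}
    (ha : a + σ₁ = 1 / 2) (hc : c + σ₂ = 1 / 2) :
    thetaTerm τ₁ τ₂ τ₁₂ 1 1 0 0 u v (A + B - σ₁, C + D - σ₂) *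
        thetaTerm τ₁ τ₂ τ₁₂ 0 0 0 0 u v (A - B, C - D) =
      thetaTerm (2 * τ₁) (2 * τ₂) (2 * τ₁₂) a c 0 0 (2 * u) (2 * v) (A, C) *
        thetaTerm (2 * τ₁) (2 * τ₂) (2 * τ₁₂) a c 0 0 0 0 (B, D) := by
  obtain rfl : a = 1 / 2 - σ₁ := by linarith
  obtain rfl : c = 1 / 2 - σ₂ := by linarith
  simp only [thetaTerm, ← Complex.exp_add]
  congr 1
  push_cast
  ring

noncomputable def halfChar (s : Bool) : ℝ := cond s (-(1 / 2)) (1 / 2)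

lemma halfChar_add (s : Bool) : halfChar s + ((cond s 1 0 : ℤ) : ℝ) = 1 / 2 := by
  cases s <;> norm_num [halfChar]

variable {τ₁ τ₂ τ₁₂}

lemma theta_mul_theta_eq_sum_Theta2 (h₂ : 0 < τ₂.im) (h : τ₁₂.im ^ 2 < τ₁.im * τ₂.im) :
    theta τ₁ τ₂ τ₁₂ 1 1 0 0 u v * theta τ₁ τ₂ τ₁₂ 0 0 0 0 u v =
      ∑ s : Bool × Bool, Theta2 τ₁ τ₂ τ₁₂ (halfChar s.1) (halfChar s.2) 0 0 (2 * u) (2 * v) *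
        Theta2 τ₁ τ₂ τ₁₂ (halfChar s.1) (halfChar s.2) 0 0 0 0 := by
  have h₂' : 0 < (2 * τ₂).im := by simpa using h₂
  have h' : (2 * τ₁₂).im ^ 2 < (2 * τ₁).im * (2 * τ₂).im := by
    simp only [mul_im, re_ofNat, im_ofNat, zero_mul, add_zero]; nlinarith
  have H₁ := summable_norm_thetaTerm 1 1 0 0 u v h₂ h
  have H₀ := summable_norm_thetaTerm 0 0 0 0 u v h₂ h
  have H : Summable fun z ↦ thetaTerm τ₁ τ₂ τ₁₂ 1 1 0 0 u v (sumSubEquiv₂ z).1 *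
      thetaTerm τ₁ τ₂ τ₁₂ 0 0 0 0 u v (sumSubEquiv₂ z).2 :=
    sumSubEquiv₂.summable_iff.mpr (H₁.mul_norm H₀).of_norm
  rw [theta_eq_tsum_thetaTerm, theta_eq_tsum_thetaTerm, tsum_mul_tsum_of_summable_norm H₁ H₀,
    ← sumSubEquiv₂.tsum_eq, H.tsum_prod, tsum_fintype]
  refine Finset.sum_congr rfl fun ⟨s, t⟩ _ ↦ ?_
  rw [Theta2, Theta2, theta_eq_tsum_thetaTerm, theta_eq_tsum_thetaTerm,
    tsum_mul_tsum_of_summable_norm (summable_norm_thetaTerm _ _ _ _ _ _ h₂' h')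
      (summable_norm_thetaTerm _ _ _ _ _ _ h₂' h')]
  exact tsum_congr fun ⟨⟨A, C⟩, ⟨B, D⟩⟩ ↦ thetaTerm_mul_thetaTerm_eq_doubled _ _ _ _ _ A B C D _ _
    (halfChar_add s) (halfChar_add t)

end doubling

theorem half_characteristic_relation_a_general (τ₁ τ₂ τ₁₂ : ℂ)
    (hτ₂ : 0 < τ₂.im) (hτ : τ₁₂.im ^ 2 < τ₁.im * τ₂.im)
    (u v : ℂ) :
    theta τ₁ τ₂ τ₁₂ 1 1 0 0 u v * theta τ₁ τ₂ τ₁₂ 0 0 0 0 u v =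
      (Theta2 τ₁ τ₂ τ₁₂ (1/2) (1/2) 0 0 (2 * u) (2 * v) +
          Theta2 τ₁ τ₂ τ₁₂ (-(1/2)) (-(1/2)) 0 0 (2 * u) (2 * v)) *
        Theta2 τ₁ τ₂ τ₁₂ (1/2) (1/2) 0 0 0 0 +
      (Theta2 τ₁ τ₂ τ₁₂ (1/2) (-(1/2)) 0 0 (2 * u) (2 * v) +
          Theta2 τ₁ τ₂ τ₁₂ (-(1/2)) (1/2) 0 0 (2 * u) (2 * v)) *
        Theta2 τ₁ τ₂ τ₁₂ (1/2) (-(1/2)) 0 0 0 0 := by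
  have Theta2_neg (a c : ℝ) :
      Theta2 τ₁ τ₂ τ₁₂ (-a) (-c) 0 0 0 0 = Theta2 τ₁ τ₂ τ₁₂ a c 0 0 0 0 := by
    simpa only [Theta2, neg_zero] using theta_neg (2 * τ₁) (2 * τ₂) (2 * τ₁₂) a c 0 0 0 0
  rw [theta_mul_theta_eq_sum_Theta2 u v hτ₂ hτ, Fintype.sum_prod_type]
  simp only [Fintype.sum_bool, halfChar, cond_true, cond_false]
  rw [Theta2_neg (1 / 2) (1 / 2), ← Theta2_neg (1 / 2) (-(1 / 2)), neg_neg]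
  ring

theorem half_characteristic_relation_a (τ₁ τ₂ τ₁₂ : ℂ)
    (hτ₁ : 0 < τ₁.im) (hτ₂ : 0 < τ₂.im) (hτ : τ₁₂.im ^ 2 < τ₁.im * τ₂.im)
    (u v : ℂ) :
    theta τ₁ τ₂ τ₁₂ 1 1 0 0 u v * theta τ₁ τ₂ τ₁₂ 0 0 0 0 u v =
      (Theta2 τ₁ τ₂ τ₁₂ (1/2) (1/2) 0 0 (2 * u) (2 * v) +
          Theta2 τ₁ τ₂ τ₁₂ (-(1/2)) (-(1/2)) 0 0 (2 * u) (2 * v)) *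
        Theta2 τ₁ τ₂ τ₁₂ (1/2) (1/2) 0 0 0 0 +
      (Theta2 τ₁ τ₂ τ₁₂ (1/2) (-(1/2)) 0 0 (2 * u) (2 * v) +
          Theta2 τ₁ τ₂ τ₁₂ (-(1/2)) (1/2) 0 0 (2 * u) (2 * v)) *
        Theta2 τ₁ τ₂ τ₁₂ (1/2) (-(1/2)) 0 0 0 0 :=
  half_characteristic_relation_a_general τ₁ τ₂ τ₁₂ hτ₂ hτ u v
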